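/- arXiv:2004.01867 — 7 statements merged into one kernel-verified Lean document; each statement's English description precedes it below -/
import Mathlib

section
/- Let F_1, …, F_q be n×n sub-stochastic matrices, each having all diagonal entries strictly positive. Suppose that for every index i₂ ∈ {1,…,n} there exist indices 1 ≤ s₁ < s₂ ≤ q and i₁ ∈ {1,…,n} such that the i₁-th row sum of F_{s₁} is strictly less than 1 and the (i₂,i₁) entry of F_{s₂} is strictly positive. Then the infinity norm of the product F_q ⋯ F_2 F_1 is strictly less than 1, and hence its spectral radius is strictly less than 1. -/
/-!
Row `i` of `A * B` has sum `∑ₖ A i k (∑ⱼ B k j) ≤ ∑ₖ A i k ≤ 1` for sub-stochastic `A`, `B`, with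
strict inequality when `A i k > 0` for a row `k` of `B` with sum `< 1`. Taking `k = i`, a positive
diagonal lets such a deficient row survive multiplication on the left; it survives multiplication
on the right anyway. So row `i₁` of `F_{s₂-1} ⋯ F_1` is deficient because row `i₁` of `F_{s₁}` is,
row `i₂` of `F_{s₂} ⋯ F_1` is deficient through the entry `(F_{s₂})_{i₂ i₁} > 0`, and hence so is
row `i₂` of the whole product. The spectral radius is at most the `ℓ∞` operator norm.
-/

def SubStochastic {n : ℕ} (F : Matrix (Fin n) (Fin n) ℝ) : Prop :=
  (∀ i j, 0 ≤ F i j) ∧ (∀ i, ∑ j, F i j ≤ 1)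

noncomputable def infNorm {m : Type*} [Fintype m] (M : Matrix m m ℝ) : ℝ :=
  ⨆ i, ∑ j, |M i j|

noncomputable def specRad {n : ℕ} (M : Matrix (Fin n) (Fin n) ℝ) : ℝ :=
  ⨆ μ : spectrum ℂ (M.map (algebraMap ℝ ℂ)), ‖(μ : ℂ)‖

theorem List.pair_sublist_ofFn {α : Type*} {q : ℕ} (f : Fin q → α) {a b : Fin q} (h : a < b) :
    [f a, f b].Sublist (List.ofFn f) := by
  have hnodup : [a, b].Nodup := by simp [h.ne]
  have hsorted : [a, b].Pairwise (· < ·) := by simp [h]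
  rw [List.ofFn_eq_map]
  exact (List.sublist_of_subperm_of_pairwise (List.subperm_of_subset hnodup (by simp))
    hsorted (List.pairwise_lt_finRange q)).map f

theorem Matrix.sum_mul_apply {m R : Type*} [Fintype m] [NonUnitalNonAssocSemiring R]
    (A B : Matrix m m R) (i : m) : ∑ j, (A * B) i j = ∑ k, A i k * ∑ j, B k j := by
  simp only [Matrix.mul_apply, Finset.mul_sum]
  exact Finset.sum_comm

section InfNorm

variable {m : Type*} [Fintype m]

theorem infNorm_nonneg (M : Matrix m m ℝ) : 0 ≤ infNorm M :=
  Real.iSup_nonneg fun _ => by positivity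

theorem sum_abs_le_infNorm (M : Matrix m m ℝ) (i : m) : ∑ j, |M i j| ≤ infNorm M :=
  le_ciSup (Finite.bddAbove_range fun i => ∑ j, |M i j|) i

theorem infNorm_lt_of_forall_sum_abs_lt {M : Matrix m m ℝ} {c : ℝ} (hc : 0 < c)
    (h : ∀ i, ∑ j, |M i j| < c) : infNorm M < c := by
  rcases isEmpty_or_nonempty m with _ | _
  · rwa [infNorm, Real.iSup_of_isEmpty]
  · obtain ⟨i₀, hi₀⟩ := Finite.exists_max fun i => ∑ j, |M i j|
    exact (ciSup_le hi₀).trans_lt (h i₀)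

attribute [local instance] Matrix.linftyOpNormedAddCommGroup Matrix.linftyOpNormedRing
  Matrix.linftyOpNormedAlgebra

theorem linfty_opNorm_map_ofReal_le_infNorm (M : Matrix m m ℝ) :
    ‖M.map (algebraMap ℝ ℂ)‖ ≤ infNorm M := by
  rw [← coe_nnnorm, ← Real.le_toNNReal_iff_coe_le (infNorm_nonneg M),
    Matrix.linfty_opNNNorm_def]
  refine Finset.sup_le fun i _ => ?_
  rw [Real.le_toNNReal_iff_coe_le (infNorm_nonneg M), NNReal.coe_sum]
  simpa using sum_abs_le_infNorm M i

theorem specRad_le_infNorm {n : ℕ} (M : Matrix (Fin n) (Fin n) ℝ) : specRad M ≤ infNorm M := by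
  refine Real.iSup_le (fun μ => ?_) (infNorm_nonneg M)
  rcases isEmpty_or_nonempty (Fin n) with _ | _
  · exact absurd μ.2 (by simp [spectrum.of_subsingleton])
  · exact (spectrum.norm_le_norm_of_mem μ.2).trans (linfty_opNorm_map_ofReal_le_infNorm M)

end InfNorm

namespace SubStochastic

variable {n : ℕ} {A B : Matrix (Fin n) (Fin n) ℝ}

theorem one : SubStochastic (1 : Matrix (Fin n) (Fin n) ℝ) :=
  ⟨fun i j => by by_cases h : i = j <;> simp [Matrix.one_apply, h],
    fun i => by simp [Matrix.one_apply]⟩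

theorem sum_mul_le_sum (hA : SubStochastic A) (hB : SubStochastic B) (i : Fin n) :
    ∑ k, A i k * ∑ j, B k j ≤ ∑ k, A i k :=
  Finset.sum_le_sum fun k _ => mul_le_of_le_one_right (hA.1 i k) (hB.2 k)

theorem mul (hA : SubStochastic A) (hB : SubStochastic B) : SubStochastic (A * B) :=
  ⟨fun i j => by
      rw [Matrix.mul_apply]
      exact Finset.sum_nonneg fun k _ => mul_nonneg (hA.1 i k) (hB.1 k j),
    fun i => (Matrix.sum_mul_apply A B i).trans_le ((hA.sum_mul_le_sum hB i).trans (hA.2 i))⟩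

theorem mul_apply_self_pos (hA : SubStochastic A) (hB : SubStochastic B) {i : Fin n}
    (hAi : 0 < A i i) (hBi : 0 < B i i) : 0 < (A * B) i i :=
  (mul_pos hAi hBi).trans_le <| Finset.single_le_sum
    (fun k _ => mul_nonneg (hA.1 i k) (hB.1 k i)) (Finset.mem_univ i)

theorem sum_mul_apply_lt_one_of_left (hA : SubStochastic A) (hB : SubStochastic B) {i : Fin n}
    (hdef : ∑ j, A i j < 1) : ∑ j, (A * B) i j < 1 :=
  (Matrix.sum_mul_apply A B i).trans_lt ((hA.sum_mul_le_sum hB i).trans_lt hdef)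

theorem sum_mul_apply_lt_one_of_pos (hA : SubStochastic A) (hB : SubStochastic B)
    {i k : Fin n} (hpos : 0 < A i k) (hdef : ∑ j, B k j < 1) : ∑ j, (A * B) i j < 1 := by
  rw [Matrix.sum_mul_apply]
  calc ∑ k, A i k * ∑ j, B k j < ∑ k, A i k :=
        Finset.sum_lt_sum (fun k _ => mul_le_of_le_one_right (hA.1 i k) (hB.2 k))
          ⟨k, Finset.mem_univ k, mul_lt_of_lt_one_right hpos hdef⟩
    _ ≤ 1 := hA.2 i

end SubStochastic

section PosDiag

variable {n : ℕ}

def subStochasticPosDiag (n : ℕ) : Submonoid (Matrix (Fin n) (Fin n) ℝ) where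
  carrier := {A | SubStochastic A ∧ ∀ i, 0 < A i i}
  one_mem' := ⟨SubStochastic.one, fun i => by simp⟩
  mul_mem' hA hB := ⟨hA.1.mul hB.1, fun i => hA.1.mul_apply_self_pos hB.1 (hA.2 i) (hB.2 i)⟩

theorem sum_prod_apply_lt_one_of_mem {l : List (Matrix (Fin n) (Fin n) ℝ)}
    (hl : ∀ A ∈ l, A ∈ subStochasticPosDiag n) {A : Matrix (Fin n) (Fin n) ℝ} (hA : A ∈ l)
    {i : Fin n} (hdef : ∑ j, A i j < 1) : ∑ j, l.prod i j < 1 := by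
  induction l with
  | nil => simp at hA
  | cons C l ih =>
    obtain ⟨hC, htail⟩ := List.forall_mem_cons.1 hl
    have hprod := (subStochasticPosDiag n).list_prod_mem htail
    rw [List.prod_cons]
    rcases List.mem_cons.1 hA with rfl | hA
    · exact hC.1.sum_mul_apply_lt_one_of_left hprod.1 hdef
    · exact hC.1.sum_mul_apply_lt_one_of_pos hprod.1 (hC.2 i) (ih htail hA)

theorem sum_prod_apply_lt_one_of_sublist {l : List (Matrix (Fin n) (Fin n) ℝ)}
    (hl : ∀ A ∈ l, A ∈ subStochasticPosDiag n) {A B : Matrix (Fin n) (Fin n) ℝ}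
    (hAB : [A, B].Sublist l) {i₁ i₂ : Fin n} (hpos : 0 < A i₂ i₁) (hdef : ∑ j, B i₁ j < 1) :
    ∑ j, l.prod i₂ j < 1 := by
  induction l with
  | nil => simp at hAB
  | cons C l ih =>
    obtain ⟨hC, htail⟩ := List.forall_mem_cons.1 hl
    have hprod := (subStochasticPosDiag n).list_prod_mem htail
    rw [List.prod_cons]
    rcases List.sublist_cons_iff.1 hAB with hAB | ⟨_, hCA, hB⟩
    · exact hC.1.sum_mul_apply_lt_one_of_pos hprod.1 (hC.2 i₂) (ih htail hAB)
    · obtain ⟨rfl, rfl⟩ := List.cons_eq_cons.1 hCA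
      exact hC.1.sum_mul_apply_lt_one_of_pos hprod.1 hpos
        (sum_prod_apply_lt_one_of_mem htail (List.singleton_sublist.1 hB) hdef)

end PosDiag

/-- Theorem 2.4(2): Let `F 0, …, F (q-1)` be `n × n` sub-stochastic matrices with
strictly positive diagonal entries. If for every index `i₂` there are
`s₁ < s₂` and an index `i₁` with the `i₁`-th row sum of `F s₁` strictly less
than `1` and `(F s₂) i₂ i₁ > 0`, then the product `F (q-1) ⋯ F 1 * F 0` has
infinity norm strictly less than `1`, and hence spectral radius strictly less
than `1`. -/
theorem subStochastic_prod_infNorm_lt_one {n q : ℕ}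
    (F : Fin q → Matrix (Fin n) (Fin n) ℝ)
    (hsub : ∀ s, SubStochastic (F s))
    (hdiag : ∀ s i, 0 < F s i i)
    (hkey : ∀ i₂ : Fin n, ∃ s₁ s₂ : Fin q, s₁ < s₂ ∧ ∃ i₁ : Fin n,
      (∑ j, F s₁ i₁ j) < 1 ∧ 0 < F s₂ i₂ i₁) :
    infNorm ((List.ofFn F).reverse.prod) < 1 ∧
      specRad ((List.ofFn F).reverse.prod) < 1 := by
  have hmem : ∀ A ∈ (List.ofFn F).reverse, A ∈ subStochasticPosDiag n := by
    simpa [List.mem_ofFn] using fun s => ⟨hsub s, hdiag s⟩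
  have hprod := ((subStochasticPosDiag n).list_prod_mem hmem).1
  have hrow : ∀ i₂, ∑ j, |(List.ofFn F).reverse.prod i₂ j| < 1 := by
    intro i₂
    obtain ⟨s₁, s₂, hs, i₁, hdef, hpos⟩ := hkey i₂
    simp only [abs_of_nonneg (hprod.1 _ _)]
    exact sum_prod_apply_lt_one_of_sublist hmem
      (List.reverse_sublist.2 (List.pair_sublist_ofFn F hs)) hpos hdef
  have hinf := infNorm_lt_of_forall_sum_abs_lt one_pos hrow
  exact ⟨hinf, (specRad_le_infNorm _).trans_lt hinf⟩
end

section
/- Let F be an n×n sub-stochastic matrix with positive diagonal entries, let i₁ be an index whose row sum in F is strictly less than 1, and let G be an n×n sub-stochastic matrix with positive diagonal entries such that G_{i₂ i₁} > 0. Then the i₂-th row sum of the product G·F is strictly less than 1. -/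
/-- Key single-step lemma: if `F` is sub-stochastic with positive diagonal and
the `i₁`-th row sum of `F` is `< 1`, and `G` is sub-stochastic with positive
diagonal and `G i₂ i₁ > 0`, then the `i₂`-th row sum of `G * F` is `< 1`. -/
theorem rowSum_mul_lt_one {n : ℕ} (F G : Matrix (Fin n) (Fin n) ℝ)
    (hF : SubStochastic F) (hFdiag : ∀ i, 0 < F i i)
    (hG : SubStochastic G) (hGdiag : ∀ i, 0 < G i i)
    (i₁ i₂ : Fin n) (hrow : (∑ j, F i₁ j) < 1) (hGpos : 0 < G i₂ i₁) :
    ∑ j, (G * F) i₂ j < 1 := by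
  have key : ∑ j, (G * F) i₂ j = ∑ k, G i₂ k * ∑ j, F k j := by
    simp only [Matrix.mul_apply, Finset.mul_sum]
    rw [Finset.sum_comm]
  rw [key]
  calc ∑ k, G i₂ k * ∑ j, F k j < ∑ k, G i₂ k * 1 := by
        apply Finset.sum_lt_sum
        · intro k _
          exact mul_le_mul_of_nonneg_left (hF.2 k) (hG.1 i₂ k)
        · exact ⟨i₁, Finset.mem_univ _, by
            exact mul_lt_mul_of_pos_left hrow hGpos⟩
    _ = ∑ k, G i₂ k := by simp
    _ ≤ 1 := hG.2 i₂
end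

section
/- Let F be an n×n sub-stochastic matrix, let S₁ = {s : Λ_s[F] < 1} and S₂ = {s : Λ_s[F] = 1} be nonempty, and set α₁ = max{Λ_s[F] : Λ_s[F] < 1} and α₂ = min{F_{ij} : F_{ij} > 0}. Suppose that for every k ∈ S₂ there is a chain of strictly positive entries F_{k i_r}, F_{i_r i_{r-1}}, …, F_{i_2 i_1}, F_{i_1 i} with i ∈ S₁ and consecutive indices distinct, and let |C*| be the maximum length among these chains over all k ∈ S₂. Then ρ(F) ≤ (1 − (1 − α₁)α₂^{|C*|})^{1/(|C*|+1)} < 1. -/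
/-- A non-zero element chain of length `L ≥ 1` in `F` from `i` to `k`:
indices `p 0 = i, p 1, …, p L = k` with consecutive indices distinct and each
entry `F (p (t+1)) (p t)` strictly positive.  The length is the number of
entries in the chain. -/
def MatChain {n : ℕ} (F : Matrix (Fin n) (Fin n) ℝ) (i k : Fin n) (L : ℕ) : Prop :=
  1 ≤ L ∧ ∃ p : Fin (L + 1) → Fin n, p 0 = i ∧ p (Fin.last L) = k ∧
    (∀ t : Fin L, p t.succ ≠ p t.castSucc) ∧
    (∀ t : Fin L, 0 < F (p t.succ) (p t.castSucc))

/-!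
Write `d_m(k) = 1 - ∑ⱼ (F ^ m) k j` for the deficiency of row `k` of `F ^ m`. Since `F` is
sub-stochastic, `d_m ≥ 0`, `d_m` grows with `m`, and `d_{m+1}(a) ≥ F a b · d_m(b)`: the
deficiency of row `b` leaks into every row `a` with `F a b > 0`, losing at most a factor `α₂`.
Following a chain of length `L ≤ L*` from a row `i` with `d_1(i) ≥ 1 - α₁`, every row of
`F ^ (L* + 1)` has sum at most `β = 1 - (1 - α₁) α₂ ^ L*`. By Gershgorin, every eigenvalue `μ`
of `F` has `|μ| ^ (L* + 1) ≤ β`.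
-/

open Finset

theorem exists_norm_le_sum_abs_of_mem_spectrum_map {ι : Type*} [Fintype ι] [DecidableEq ι]
    (M : Matrix ι ι ℝ) {μ : ℂ} (hμ : μ ∈ spectrum ℂ (M.map (algebraMap ℝ ℂ))) :
    ∃ k, ‖μ‖ ≤ ∑ j, |M k j| := by
  rw [← Matrix.spectrum_toLin', ← Module.End.hasEigenvalue_iff_mem_spectrum] at hμ
  obtain ⟨k, hk⟩ := eigenvalue_mem_ball hμ
  rw [mem_closedBall_iff_norm'] at hk
  have hk' : ‖(M k k : ℂ) - μ‖ ≤ ∑ j, |M k j| - |M k k| := by simpa using hk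
  refine ⟨k, ?_⟩
  calc ‖μ‖ ≤ ‖(M k k : ℂ)‖ + ‖(M k k : ℂ) - μ‖ := norm_le_norm_add_norm_sub _ _
    _ ≤ ∑ j, |M k j| := by rw [Complex.norm_real, Real.norm_eq_abs]; linarith

theorem specRad_le_of_sum_abs_pow_le {n : ℕ} (M : Matrix (Fin n) (Fin n) ℝ) {m : ℕ}
    (hm : m ≠ 0) {c : ℝ} (hc : 0 ≤ c) (h : ∀ k, ∑ j, |(M ^ m) k j| ≤ c) :
    specRad M ≤ c ^ (m : ℝ)⁻¹ := by
  refine Real.iSup_le (fun ⟨μ, hμ⟩ => ?_) (Real.rpow_nonneg hc _)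
  have hμm : μ ^ m ∈ spectrum ℂ ((M ^ m).map (algebraMap ℝ ℂ)) := by
    rw [Matrix.map_pow]
    exact spectrum.pow_image_subset _ m ⟨μ, hμ, rfl⟩
  obtain ⟨k, hk⟩ := exists_norm_le_sum_abs_of_mem_spectrum_map _ hμm
  rw [Real.le_rpow_inv_iff_of_pos (norm_nonneg _) hc (by positivity), Real.rpow_natCast,
    ← norm_pow]
  exact hk.trans (h k)

theorem Matrix.sum_mul_apply_right {l m n R : Type*} [Fintype m] [Fintype n]
    [NonUnitalNonAssocSemiring R] (A : Matrix l m R) (B : Matrix m n R) (k : l) :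
    ∑ j, (A * B) k j = ∑ i, A k i * ∑ j, B i j := by
  simp only [Matrix.mul_apply, mul_sum]
  exact sum_comm

theorem sum_mul_apply_le {l m n : Type*} [Fintype m] [Fintype n] {A : Matrix l m ℝ}
    {B : Matrix m n ℝ} (hA : ∀ i j, 0 ≤ A i j) (hB : ∀ i, ∑ j, B i j ≤ 1) (k : l) :
    ∑ j, (A * B) k j ≤ ∑ j, A k j := by
  rw [Matrix.sum_mul_apply_right]
  exact sum_le_sum fun i _ => mul_le_of_le_one_right (hA k i) (hB i)

section SubStochastic

variable {ι : Type*} [Fintype ι] [DecidableEq ι] {F : Matrix ι ι ℝ}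
  (hnn : ∀ i j, 0 ≤ F i j) (hrow : ∀ i, ∑ j, F i j ≤ 1)
include hnn hrow

theorem sum_pow_apply_le_one (m : ℕ) (k : ι) : ∑ j, (F ^ m) k j ≤ 1 := by
  induction m generalizing k with
  | zero => simp [Matrix.one_apply]
  | succ m ih => exact (pow_succ' F m ▸ sum_mul_apply_le hnn ih k).trans (hrow k)

theorem antitone_sum_pow_apply (k : ι) : Antitone fun m => ∑ j, (F ^ m) k j :=
  antitone_nat_of_succ_le fun m =>
    pow_succ F m ▸ sum_mul_apply_le (Matrix.pow_apply_nonneg hnn m) hrow k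

theorem mul_sub_sum_pow_apply_le (m : ℕ) (a b : ι) :
    F a b * (1 - ∑ j, (F ^ m) b j) ≤ 1 - ∑ j, (F ^ (m + 1)) a j := by
  have hsingle : F a b * (1 - ∑ l, (F ^ m) b l) ≤ ∑ j, F a j * (1 - ∑ l, (F ^ m) j l) :=
    single_le_sum (f := fun j => F a j * (1 - ∑ l, (F ^ m) j l))
      (fun j _ => mul_nonneg (hnn a j) (sub_nonneg.2 (sum_pow_apply_le_one hnn hrow m j)))
      (mem_univ b)
  have hsplit :
      ∑ j, F a j * (1 - ∑ l, (F ^ m) j l) = ∑ j, F a j - ∑ j, (F ^ (m + 1)) a j := by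
    rw [pow_succ', Matrix.sum_mul_apply_right]
    simp only [mul_sub, mul_one, sum_sub_distrib]
  linarith [hrow a]

theorem sub_sum_mul_pow_le_of_path {L : ℕ} (p : Fin (L + 1) → ι) {c : ℝ} (hc : 0 ≤ c)
    (hp : ∀ t : Fin L, c ≤ F (p t.succ) (p t.castSucc)) :
    (1 - ∑ j, F (p 0) j) * c ^ L ≤ 1 - ∑ j, (F ^ (L + 1)) (p (Fin.last L)) j := by
  suffices h : ∀ t : Fin (L + 1),
      (1 - ∑ j, F (p 0) j) * c ^ (t : ℕ) ≤ 1 - ∑ j, (F ^ ((t : ℕ) + 1)) (p t) j by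
    simpa using h (Fin.last L)
  refine Fin.induction (by simp) fun t ih => ?_
  have hdefect : 0 ≤ 1 - ∑ j, (F ^ ((t : ℕ) + 1)) (p t.castSucc) j :=
    sub_nonneg.2 (sum_pow_apply_le_one hnn hrow _ _)
  calc (1 - ∑ j, F (p 0) j) * c ^ (t.succ : ℕ)
        = c * ((1 - ∑ j, F (p 0) j) * c ^ (t.castSucc : ℕ)) := by
          rw [Fin.val_succ, Fin.val_castSucc, pow_succ]; ring
    _ ≤ c * (1 - ∑ j, (F ^ ((t : ℕ) + 1)) (p t.castSucc) j) := mul_le_mul_of_nonneg_left ih hc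
    _ ≤ F (p t.succ) (p t.castSucc) * (1 - ∑ j, (F ^ ((t : ℕ) + 1)) (p t.castSucc) j) :=
        mul_le_mul_of_nonneg_right (hp t) hdefect
    _ ≤ 1 - ∑ j, (F ^ ((t.succ : ℕ) + 1)) (p t.succ) j :=
        mul_sub_sum_pow_apply_le hnn hrow _ _ _

end SubStochastic

theorem sum_pow_apply_le_of_chains {n : ℕ} {F : Matrix (Fin n) (Fin n) ℝ}
    (hnn : ∀ i j, 0 ≤ F i j) (hrow : ∀ i, ∑ j, F i j ≤ 1) {α₁ α₂ : ℝ}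
    (hα₁ : ∀ s, ∑ j, F s j < 1 → ∑ j, F s j ≤ α₁) (hα₁_le : α₁ ≤ 1)
    (hα₂ : ∀ a b, 0 < F a b → α₂ ≤ F a b) (hα₂_nonneg : 0 ≤ α₂) (hα₂_le : α₂ ≤ 1)
    {Lstar : ℕ}
    (hchain : ∀ k, (∑ j, F k j) = 1 → ∃ i, (∑ j, F i j) < 1 ∧
      ∃ L, L ≤ Lstar ∧ MatChain F i k L) (k : Fin n) :
    ∑ j, (F ^ (Lstar + 1)) k j ≤ 1 - (1 - α₁) * α₂ ^ Lstar := by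
  rcases (hrow k).lt_or_eq with hk | hk
  · have hmono : ∑ j, (F ^ (Lstar + 1)) k j ≤ ∑ j, (F ^ 1) k j :=
      antitone_sum_pow_apply hnn hrow k (by omega)
    have hdrop : (1 - α₁) * α₂ ^ Lstar ≤ 1 - α₁ :=
      mul_le_of_le_one_right (sub_nonneg.2 hα₁_le) (pow_le_one₀ hα₂_nonneg hα₂_le)
    rw [pow_one] at hmono
    linarith [hα₁ k hk]
  · obtain ⟨i, hi, L, hL, -, p, rfl, rfl, -, hpos⟩ := hchain k hk
    have hpath := sub_sum_mul_pow_le_of_path hnn hrow p hα₂_nonneg fun t => hα₂ _ _ (hpos t)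
    have hmono : ∑ j, (F ^ (Lstar + 1)) (p (Fin.last L)) j
        ≤ ∑ j, (F ^ (L + 1)) (p (Fin.last L)) j :=
      antitone_sum_pow_apply hnn hrow _ (by omega)
    have hdefect : (1 - α₁) * α₂ ^ Lstar ≤ (1 - ∑ j, F (p 0) j) * α₂ ^ L :=
      mul_le_mul (by linarith [hα₁ _ hi]) (pow_le_pow_of_le_one hα₂_nonneg hα₂_le hL)
        (pow_nonneg hα₂_nonneg _) (by linarith)
    linarith

theorem specRad_le_of_chains_general {n : ℕ} (F : Matrix (Fin n) (Fin n) ℝ)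
    (hnn : ∀ i j, 0 ≤ F i j) (hrow : ∀ i, ∑ j, F i j ≤ 1)
    (α₁ α₂ : ℝ)
    (hα₁ : IsGreatest {x | ∃ s, (∑ j, F s j) = x ∧ x < 1} α₁)
    (hα₂ : IsLeast {x | ∃ i j, F i j = x ∧ 0 < x} α₂)
    (Lstar : ℕ)
    (hchain : ∀ k, (∑ j, F k j) = 1 → ∃ i, (∑ j, F i j) < 1 ∧
      ∃ L, L ≤ Lstar ∧ MatChain F i k L) :
    specRad F ≤ (1 - (1 - α₁) * α₂ ^ Lstar) ^ ((Lstar + 1 : ℝ)⁻¹) ∧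
      (1 - (1 - α₁) * α₂ ^ Lstar) ^ ((Lstar + 1 : ℝ)⁻¹) < 1 := by
  obtain ⟨s, -, hα₁_lt⟩ := hα₁.1
  obtain ⟨a, b, hab, hα₂_pos⟩ := hα₂.1
  have hα₂_le : α₂ ≤ 1 :=
    hab ▸ (single_le_sum (fun j _ => hnn a j) (mem_univ b)).trans (hrow a)
  have hbound := sum_pow_apply_le_of_chains hnn hrow (fun s hs => hα₁.2 ⟨s, rfl, hs⟩)
    hα₁_lt.le (fun a b h => hα₂.2 ⟨a, b, rfl, h⟩) hα₂_pos.le hα₂_le hchain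
  have hβ_nonneg : 0 ≤ 1 - (1 - α₁) * α₂ ^ Lstar :=
    (sum_nonneg fun j _ => Matrix.pow_apply_nonneg hnn _ s j).trans (hbound s)
  have hβ_lt : 1 - (1 - α₁) * α₂ ^ Lstar < 1 := by
    linarith [mul_pos (sub_pos.2 hα₁_lt) (pow_pos hα₂_pos Lstar)]
  refine ⟨?_, Real.rpow_lt_one hβ_nonneg hβ_lt (by positivity)⟩
  have := specRad_le_of_sum_abs_pow_le F Lstar.succ_ne_zero hβ_nonneg fun k => by
    simpa only [abs_of_nonneg (Matrix.pow_apply_nonneg hnn _ k _)] using hbound k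
  simpa using this

/-- Theorem 2.2: Let `F` be sub-stochastic with `S₁ = {s | Λ_s[F] < 1}` and
`S₂ = {s | Λ_s[F] = 1}` nonempty, `α₁` the largest row sum `< 1`, `α₂` the
smallest positive entry.  If every `k ∈ S₂` is reached from some `i ∈ S₁` by a
non-zero element chain, and `Lstar` is the maximal length of these chains,
then `ρ(F) ≤ (1 - (1 - α₁) α₂ ^ Lstar) ^ (1/(Lstar+1)) < 1`. -/
theorem specRad_le_of_chains {n : ℕ} (F : Matrix (Fin n) (Fin n) ℝ)
    (hnn : ∀ i j, 0 ≤ F i j) (hrow : ∀ i, ∑ j, F i j ≤ 1)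
    (hS₁ : ∃ s, ∑ j, F s j < 1) (hS₂ : ∃ s, ∑ j, F s j = 1)
    (α₁ α₂ : ℝ)
    (hα₁ : IsGreatest {x | ∃ s, (∑ j, F s j) = x ∧ x < 1} α₁)
    (hα₂ : IsLeast {x | ∃ i j, F i j = x ∧ 0 < x} α₂)
    (Lstar : ℕ)
    (hchain : ∀ k, (∑ j, F k j) = 1 → ∃ i, (∑ j, F i j) < 1 ∧
      ∃ L, L ≤ Lstar ∧ MatChain F i k L)
    (hmax : ∃ k, (∑ j, F k j) = 1 ∧ ∃ i, (∑ j, F i j) < 1 ∧ MatChain F i k Lstar) :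
    specRad F ≤ (1 - (1 - α₁) * α₂ ^ Lstar) ^ ((Lstar + 1 : ℝ)⁻¹) ∧
      (1 - (1 - α₁) * α₂ ^ Lstar) ^ ((Lstar + 1 : ℝ)⁻¹) < 1 :=
  specRad_le_of_chains_general F hnn hrow α₁ α₂ hα₁ hα₂ Lstar hchain
end

section
/- Let F be an n×n nonnegative matrix with all diagonal entries zero, such that exactly one row sum is at least 1 and all other row sums are strictly less than 1. Then ρ(F) ≤ √(α₁ α₃), where α₁ = max{Λ_s[F] : Λ_s[F] < 1} and α₃ is the unique row sum that is at least 1. -/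
/-!
If `F *ᵥ v = μ • v`, let `p` and `q` be indices of the largest and second largest `|v_j|`.
Since `F` has zero diagonal, row `p` of the eigen-equation only sees entries of size at most
`|v_q|`, and row `q` only entries of size at most `|v_p|`; hence
`|μ| |v_p| ≤ Λ_p |v_q|` and `|μ| |v_q| ≤ Λ_q |v_p|`, so `|μ|² ≤ Λ_p Λ_q`.
As `p ≠ q`, at most one of the two rows is the exceptional row, so `Λ_p Λ_q ≤ α₁ α₃`.
-/

open Matrix

theorem Matrix.exists_mulVec_eq_smul_of_mem_spectrum {ι K : Type*} [Fintype ι] [DecidableEq ι]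
    [Field K] {A : Matrix ι ι K} {μ : K} (hμ : μ ∈ spectrum K A) :
    ∃ v ≠ 0, A *ᵥ v = μ • v := by
  rw [← Matrix.spectrum_toLin', ← Module.End.hasEigenvalue_iff_mem_spectrum] at hμ
  obtain ⟨v, hv⟩ := hμ.exists_hasEigenvector
  exact ⟨v, hv.2, Module.End.mem_eigenspace_iff.mp hv.1⟩

theorem Finite.exists_max_and_max_ne {ι α : Type*} [Finite ι] [Nontrivial ι] [LinearOrder α]
    (a : ι → α) : ∃ p q, q ≠ p ∧ (∀ j, a j ≤ a p) ∧ ∀ j ≠ p, a j ≤ a q := by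
  obtain ⟨p, hp⟩ := Finite.exists_max a
  have : Nonempty {j // j ≠ p} := nonempty_subtype.mpr (exists_ne p)
  obtain ⟨⟨q, hqp⟩, hq⟩ := Finite.exists_max fun j : {j // j ≠ p} => a j
  exact ⟨p, q, hqp, hp, fun j hj => hq ⟨j, hj⟩⟩

section EigenvalueBound

variable {ι : Type*} [Fintype ι] {F : Matrix ι ι ℝ}

theorem norm_mul_norm_le_rowSum_mul {μ : ℂ} {v : ι → ℂ}
    (hv : F.map (algebraMap ℝ ℂ) *ᵥ v = μ • v) (hF : ∀ i j, 0 ≤ F i j) {i : ι} (hii : F i i = 0)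
    {b : ℝ} (hb : ∀ j ≠ i, ‖v j‖ ≤ b) : ‖μ‖ * ‖v i‖ ≤ (∑ j, F i j) * b := by
  have hrow : μ * v i = ∑ j, (F i j : ℂ) * v j := by
    simpa [mulVec, dotProduct] using (congrFun hv i).symm
  have hterm (j : ι) : F i j * ‖v j‖ ≤ F i j * b := by
    rcases eq_or_ne j i with rfl | hji
    · simp [hii]
    · exact mul_le_mul_of_nonneg_left (hb j hji) (hF i j)
  calc ‖μ‖ * ‖v i‖ = ‖∑ j, (F i j : ℂ) * v j‖ := by rw [← hrow, norm_mul]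
    _ ≤ ∑ j, F i j * ‖v j‖ := by
      refine (norm_sum_le _ _).trans_eq (Finset.sum_congr rfl fun j _ => ?_)
      rw [norm_mul, Complex.norm_real, Real.norm_of_nonneg (hF i j)]
    _ ≤ ∑ j, F i j * b := Finset.sum_le_sum fun j _ => hterm j
    _ = (∑ j, F i j) * b := (Finset.sum_mul _ _ _).symm

theorem exists_ne_sq_norm_le_rowSum_mul_rowSum [DecidableEq ι] [Nontrivial ι]
    (hF : ∀ i j, 0 ≤ F i j) (hdiag : ∀ i, F i i = 0) {μ : ℂ}
    (hμ : μ ∈ spectrum ℂ (F.map (algebraMap ℝ ℂ))) :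
    ∃ p q, q ≠ p ∧ ‖μ‖ ^ 2 ≤ (∑ j, F p j) * ∑ j, F q j := by
  obtain ⟨v, hv0, hv⟩ := exists_mulVec_eq_smul_of_mem_spectrum hμ
  obtain ⟨p, q, hqp, hp, hq⟩ := Finite.exists_max_and_max_ne fun j => ‖v j‖
  refine ⟨p, q, hqp, ?_⟩
  have hvp : 0 < ‖v p‖ := by
    obtain ⟨j, hj⟩ := Function.ne_iff.mp hv0
    exact (norm_pos_iff.mpr hj).trans_le (hp j)
  have hrow_p := norm_mul_norm_le_rowSum_mul hv hF (hdiag p) hq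
  have hrow_q := norm_mul_norm_le_rowSum_mul hv hF (hdiag q) fun j _ => hp j
  have hΛp : 0 ≤ ∑ j, F p j := Finset.sum_nonneg fun j _ => hF p j
  refine le_of_mul_le_mul_right ?_ hvp
  calc ‖μ‖ ^ 2 * ‖v p‖ = ‖μ‖ * (‖μ‖ * ‖v p‖) := by ring
    _ ≤ ‖μ‖ * ((∑ j, F p j) * ‖v q‖) := by gcongr
    _ = (∑ j, F p j) * (‖μ‖ * ‖v q‖) := by ring
    _ ≤ (∑ j, F p j) * ((∑ j, F q j) * ‖v p‖) := by gcongr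
    _ = (∑ j, F p j) * (∑ j, F q j) * ‖v p‖ := by ring

end EigenvalueBound

theorem mul_le_of_isGreatest_of_lt_one {ι : Type*} {Λ : ι → ℝ} (hΛ : ∀ s, 0 ≤ Λ s) {s₀ : ι}
    (hs₀ : 1 ≤ Λ s₀) (hothers : ∀ s, s ≠ s₀ → Λ s < 1) {α₁ : ℝ}
    (hα₁ : IsGreatest {x | ∃ s, Λ s = x ∧ x < 1} α₁) {p q : ι} (hqp : q ≠ p) :
    Λ p * Λ q ≤ α₁ * Λ s₀ := by
  have hle₁ (s : ι) (hs : s ≠ s₀) : Λ s ≤ α₁ := hα₁.2 ⟨s, rfl, hothers s hs⟩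
  have hle₀ (s : ι) : Λ s ≤ Λ s₀ := by
    rcases eq_or_ne s s₀ with rfl | hs
    · exact le_rfl
    · exact (hothers s hs).le.trans hs₀
  have hα₁ : 0 ≤ α₁ := by
    obtain ⟨s, rfl, -⟩ := hα₁.1
    exact hΛ s
  rcases eq_or_ne p s₀ with rfl | hp
  · rw [mul_comm α₁]
    exact mul_le_mul_of_nonneg_left (hle₁ q hqp) (hΛ p)
  · exact mul_le_mul (hle₁ p hp) (hle₀ q) (hΛ q) hα₁

/-- Theorem 2.7: Let `F` (`n ≥ 2`) be nonnegative with zero diagonal, with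
exactly one row sum at least `1` (say at row `s₀`, with value `α₃`) and all
other row sums strictly less than `1`.  Then `ρ(F) ≤ √(α₁ α₃)`, where `α₁` is
the largest row sum `< 1`. -/
theorem specRad_le_sqrt_mul {n : ℕ} (hn : 2 ≤ n) (F : Matrix (Fin n) (Fin n) ℝ)
    (hnn : ∀ i j, 0 ≤ F i j) (hdiag : ∀ i, F i i = 0)
    (s₀ : Fin n) (hs₀ : 1 ≤ ∑ j, F s₀ j)
    (hothers : ∀ s, s ≠ s₀ → ∑ j, F s j < 1)
    (α₁ α₃ : ℝ)
    (hα₁ : IsGreatest {x | ∃ s, (∑ j, F s j) = x ∧ x < 1} α₁)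
    (hα₃ : α₃ = ∑ j, F s₀ j) :
    specRad F ≤ Real.sqrt (α₁ * α₃) := by
  have : Nontrivial (Fin n) := Fin.nontrivial_iff_two_le.mpr hn
  refine Real.iSup_le (fun ⟨μ, hμ⟩ => ?_) (Real.sqrt_nonneg _)
  obtain ⟨p, q, hqp, hμ_sq⟩ := exists_ne_sq_norm_le_rowSum_mul_rowSum hnn hdiag hμ
  have hΛ (s : Fin n) : 0 ≤ ∑ j, F s j := Finset.sum_nonneg fun j _ => hnn s j
  rw [hα₃]
  exact Real.le_sqrt_of_sq_le <|
    hμ_sq.trans (mul_le_of_isGreatest_of_lt_one hΛ hs₀ hothers hα₁ hqp)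
end

section
/- Let F_1, …, F_q be n×n nonnegative matrices with strictly positive diagonal entries. Define g = max over all s,i of row sums Λ_i[F_s] exceeding 1, c = max over all s,i of row sums Λ_i[F_s] below 1, and φ = min over all strictly positive entries of the F_s. Suppose for some fixed i₂ there exist 1 ≤ s₁ < s₂ ≤ q and an index i₁ with Λ_{i₁}[F_{s₁}] < 1 and (F_{s₂})_{i₂ i₁} > 0, and that g^q − (g − c)φ^{q−1} < 1. Then the i₂-th row sum of the product F_q ⋯ F_1 is at most g^q − (g − c)φ^{q−1}, hence strictly less than 1. -/
open Finset

lemma rowSum_mul_aux {n : ℕ} (A B : Matrix (Fin n) (Fin n) ℝ) (i : Fin n) :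
    (∑ j, (A * B) i j) = ∑ k, A i k * ∑ j, B k j := by
  simp only [Matrix.mul_apply, Finset.mul_sum]
  rw [Finset.sum_comm]

/-- Theorem 2.8: Let `F 0, …, F (q-1)` be nonnegative `n × n` matrices with
strictly positive diagonal entries, `g` the largest row sum exceeding `1`,
`c` the largest row sum below `1`, and `φ` the smallest strictly positive
entry among all the matrices.  Fix `i₂` and suppose there exist `s₁ < s₂` and
`i₁` with the `i₁`-th row sum of `F s₁` less than `1` and `(F s₂) i₂ i₁ > 0`,
and that `g^q − (g − c) φ^(q−1) < 1`.  Then the `i₂`-th row sum of the product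
`F (q-1) ⋯ F 0` is at most `g^q − (g − c) φ^(q−1)`, hence strictly less
than `1`. -/
theorem rowSum_prod_lt_one {n q : ℕ}
    (F : Fin q → Matrix (Fin n) (Fin n) ℝ)
    (hnn : ∀ s i j, 0 ≤ F s i j)
    (hdiag : ∀ s i, 0 < F s i i)
    (g c φ : ℝ)
    (hg : IsGreatest {x | ∃ s i, (∑ j, F s i j) = x ∧ 1 < x} g)
    (hc : IsGreatest {x | ∃ s i, (∑ j, F s i j) = x ∧ x < 1} c)
    (hφ : IsLeast {x | ∃ s i j, F s i j = x ∧ 0 < x} φ)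
    (i₂ : Fin n)
    (hkey : ∃ s₁ s₂ : Fin q, s₁ < s₂ ∧ ∃ i₁ : Fin n,
      (∑ j, F s₁ i₁ j) < 1 ∧ 0 < F s₂ i₂ i₁)
    (hcond : g ^ q - (g - c) * φ ^ (q - 1) < 1) :
    (∑ j, ((List.ofFn F).reverse.prod) i₂ j) ≤ g ^ q - (g - c) * φ ^ (q - 1) ∧
      (∑ j, ((List.ofFn F).reverse.prod) i₂ j) < 1 := by
  obtain ⟨s₁, s₂, hs, i₁, hrow, hpos⟩ := hkey
  obtain ⟨⟨sg, ig, hgsum, hg1⟩, hgub⟩ := hg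
  obtain ⟨⟨sc, ic, hcsum, hc1⟩, hcub⟩ := hc
  obtain ⟨⟨sφ, iφ, jφ, hφeq, hφ0⟩, hφlb⟩ := hφ
  have hg0 : (0:ℝ) < g := by linarith
  have hrowg : ∀ s i, (∑ j, F s i j) ≤ g := by
    intro s i
    rcases lt_or_ge 1 (∑ j, F s i j) with h | h
    · exact hgub ⟨s, i, rfl, h⟩
    · linarith
  have hφle : ∀ s i j, 0 < F s i j → φ ≤ F s i j := fun s i j h => hφlb ⟨s, i, j, rfl, h⟩
  have hφg : φ ≤ g := by
    have h1 : φ ≤ F s₁ i₁ i₁ := hφle _ _ _ (hdiag _ _)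
    have h2 : F s₁ i₁ i₁ ≤ ∑ j, F s₁ i₁ j :=
      Finset.single_le_sum (fun j _ => hnn s₁ i₁ j) (mem_univ i₁)
    linarith [hrowg s₁ i₁]
  have hrowc : (∑ j, F s₁ i₁ j) ≤ c := hcub ⟨s₁, i₁, rfl, hrow⟩
  -- partial products
  set P : ℕ → Matrix (Fin n) (Fin n) ℝ := fun t => (((List.ofFn F).take t).reverse).prod with hP
  have hP0 : P 0 = 1 := by simp [hP]
  have hPsucc : ∀ t (ht : t < q), P (t + 1) = F ⟨t, ht⟩ * P t := by
    intro t ht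
    have htake : (List.ofFn F).take (t + 1) = (List.ofFn F).take t ++ [F ⟨t, ht⟩] := by
      rw [List.take_succ]
      congr
      simp [List.getElem?_ofFn, ht]
    simp [hP, htake]
  set R : ℕ → Fin n → ℝ := fun t i => ∑ j, P t i j with hR
  have hR0 : ∀ i, R 0 i = 1 := by
    intro i; simp [hR, hP0, Matrix.one_apply]
  have hRsucc : ∀ t (ht : t < q) (i : Fin n), R (t + 1) i = ∑ k, F ⟨t, ht⟩ i k * R t k := by
    intro t ht i
    simp only [hR, hPsucc t ht]
    exact rowSum_mul_aux _ _ i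
  have hRg : ∀ t, ∀ i, R t i ≤ g ^ t := by
    intro t
    induction t with
    | zero => intro i; simp [hR0]
    | succ t ih =>
      intro i
      rcases lt_or_ge t q with ht | ht
      · rw [hRsucc t ht i]
        calc ∑ k, F ⟨t, ht⟩ i k * R t k ≤ ∑ k, F ⟨t, ht⟩ i k * g ^ t := by
              apply Finset.sum_le_sum
              intro k _
              exact mul_le_mul_of_nonneg_left (ih k) (hnn _ _ _)
          _ = (∑ k, F ⟨t, ht⟩ i k) * g ^ t := by rw [Finset.sum_mul]
          _ ≤ g * g ^ t := mul_le_mul_of_nonneg_right (hrowg _ _) (pow_nonneg hg0.le t)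
          _ = g ^ (t + 1) := by ring
      · -- t ≥ q : P (t+1) = P t since take saturates; but easier: P (t+1) = P t
        have : P (t + 1) = P t := by
          have hl : (List.ofFn F).length = q := by simp
          simp [hP, List.take_of_length_le, hl, ht, le_trans ht (Nat.le_succ t)]
        have : R (t + 1) i = R t i := by simp [hR, this]
        rw [this]
        calc R t i ≤ g ^ t := ih i
          _ ≤ g ^ (t + 1) := by
            apply pow_le_pow_right₀ (by linarith) (Nat.le_succ t)
  -- key propagation step
  have step : ∀ t (ht : t < q) (j₀ i : Fin n) (D : ℝ), 0 ≤ D → φ ≤ F ⟨t, ht⟩ i j₀ →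
      R t j₀ ≤ g ^ t - D → R (t + 1) i ≤ g ^ (t + 1) - φ * D := by
    intro t ht j₀ i D hD hφF hj₀
    rw [hRsucc t ht i]
    have h1 : F ⟨t, ht⟩ i j₀ * R t j₀ ≤ F ⟨t, ht⟩ i j₀ * (g ^ t - D) :=
      mul_le_mul_of_nonneg_left hj₀ (hnn _ _ _)
    have h2 : ∑ k ∈ univ.erase j₀, F ⟨t, ht⟩ i k * R t k
        ≤ ∑ k ∈ univ.erase j₀, F ⟨t, ht⟩ i k * g ^ t := by
      apply Finset.sum_le_sum
      intro k _
      exact mul_le_mul_of_nonneg_left (hRg t k) (hnn _ _ _)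
    have hsplit : ∑ k, F ⟨t, ht⟩ i k * R t k
        = F ⟨t, ht⟩ i j₀ * R t j₀ + ∑ k ∈ univ.erase j₀, F ⟨t, ht⟩ i k * R t k :=
      (Finset.add_sum_erase _ _ (mem_univ j₀)).symm
    have hsplit2 : ∑ k, F ⟨t, ht⟩ i k * g ^ t
        = F ⟨t, ht⟩ i j₀ * g ^ t + ∑ k ∈ univ.erase j₀, F ⟨t, ht⟩ i k * g ^ t :=
      (Finset.add_sum_erase _ _ (mem_univ j₀)).symm
    have h3 : (∑ k, F ⟨t, ht⟩ i k) * g ^ t ≤ g * g ^ t :=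
      mul_le_mul_of_nonneg_right (hrowg _ _) (pow_nonneg hg0.le t)
    have h4 : φ * D ≤ F ⟨t, ht⟩ i j₀ * D := mul_le_mul_of_nonneg_right hφF hD
    have h5 : (∑ k, F ⟨t, ht⟩ i k) * g ^ t = ∑ k, F ⟨t, ht⟩ i k * g ^ t := Finset.sum_mul _ _ _
    have hpow : g * g ^ t = g ^ (t + 1) := by ring
    nlinarith [h1, h2, h3, h4]
  have hS1q : (s₁ : ℕ) < q := s₁.isLt
  have hS2q : (s₂ : ℕ) < q := s₂.isLt
  have hS12 : (s₁ : ℕ) < (s₂ : ℕ) := hs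
  have hgc : (0:ℝ) < g - c := by linarith
  have hDnn : ∀ m : ℕ, 0 ≤ (g - c) * g ^ (s₁ : ℕ) * φ ^ m := by
    intro m
    positivity
  -- claim A : for s₁ < t ≤ s₂
  have claimA : ∀ t, (s₁ : ℕ) + 1 ≤ t → t ≤ (s₂ : ℕ) →
      R t i₁ ≤ g ^ t - (g - c) * g ^ (s₁ : ℕ) * φ ^ (t - ((s₁ : ℕ) + 1)) := by
    intro t
    induction t with
    | zero => intro h; omega
    | succ t ih =>
      intro h1 h2
      rcases Nat.lt_or_ge ((s₁ : ℕ) + 1) (t + 1) with hlt | hge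
      · -- inductive case: s₁ + 1 ≤ t
        have ht1 : (s₁ : ℕ) + 1 ≤ t := by omega
        have htq : t < q := by omega
        have hts2 : t ≤ (s₂ : ℕ) := by omega
        have ihp := ih ht1 hts2
        have hφd : φ ≤ F ⟨t, htq⟩ i₁ i₁ := hφle _ _ _ (hdiag _ _)
        have := step t htq i₁ i₁ _ (hDnn _) hφd ihp
        have heq : t + 1 - ((s₁ : ℕ) + 1) = (t - ((s₁ : ℕ) + 1)) + 1 := by omega
        rw [heq, pow_succ]
        calc R (t + 1) i₁ ≤ g ^ (t + 1) - φ * ((g - c) * g ^ (s₁:ℕ) * φ ^ (t - ((s₁:ℕ)+1))) := this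
          _ = g ^ (t + 1) - (g - c) * g ^ (s₁:ℕ) * (φ ^ (t - ((s₁:ℕ)+1)) * φ) := by ring
      · -- base case: t = s₁
        have ht : t = (s₁ : ℕ) := by omega
        subst ht
        have heq : (s₁:ℕ) + 1 - ((s₁:ℕ) + 1) = 0 := by omega
        have hF : (⟨(s₁:ℕ), hS1q⟩ : Fin q) = s₁ := Fin.eta s₁ hS1q
        rw [hRsucc (s₁:ℕ) hS1q i₁, heq]
        have hb : ∑ k, F ⟨(s₁:ℕ), hS1q⟩ i₁ k * R (s₁:ℕ) k
            ≤ (∑ k, F ⟨(s₁:ℕ), hS1q⟩ i₁ k) * g ^ (s₁:ℕ) := by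
          rw [Finset.sum_mul]
          apply Finset.sum_le_sum
          intro k _
          exact mul_le_mul_of_nonneg_left (hRg (s₁:ℕ) k) (hnn _ _ _)
        have hc' : (∑ k, F ⟨(s₁:ℕ), hS1q⟩ i₁ k) ≤ c := by rw [hF]; exact hrowc
        have hcg : (∑ k, F ⟨(s₁:ℕ), hS1q⟩ i₁ k) * g ^ (s₁:ℕ) ≤ c * g ^ (s₁:ℕ) :=
          mul_le_mul_of_nonneg_right hc' (pow_nonneg hg0.le _)
        have hcc : c * g ^ (s₁:ℕ) = g ^ ((s₁:ℕ) + 1) - (g - c) * g ^ (s₁:ℕ) * φ ^ 0 := by ring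
        linarith
  -- bridge at s₂
  have hbridge : R ((s₂ : ℕ) + 1) i₂
      ≤ g ^ ((s₂:ℕ) + 1) - (g - c) * g ^ (s₁:ℕ) * φ ^ ((s₂:ℕ) + 1 - ((s₁:ℕ) + 1)) := by
    have hA := claimA (s₂ : ℕ) (by omega) le_rfl
    have hF : (⟨(s₂ : ℕ), hS2q⟩ : Fin q) = s₂ := Fin.eta s₂ hS2q
    have hφF : φ ≤ F ⟨(s₂ : ℕ), hS2q⟩ i₂ i₁ := by rw [hF]; exact hφle _ _ _ hpos
    have := step (s₂ : ℕ) hS2q i₁ i₂ _ (hDnn _) hφF hA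
    have heq : (s₂:ℕ) + 1 - ((s₁:ℕ) + 1) = ((s₂:ℕ) - ((s₁:ℕ) + 1)) + 1 := by omega
    rw [heq, pow_succ]
    calc R ((s₂:ℕ) + 1) i₂
        ≤ g ^ ((s₂:ℕ)+1) - φ * ((g - c) * g ^ (s₁:ℕ) * φ ^ ((s₂:ℕ) - ((s₁:ℕ)+1))) := this
      _ = g ^ ((s₂:ℕ)+1) - (g - c) * g ^ (s₁:ℕ) * (φ ^ ((s₂:ℕ) - ((s₁:ℕ)+1)) * φ) := by ring
  -- claim B : for s₂ < t ≤ q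
  have claimB : ∀ t, (s₂ : ℕ) + 1 ≤ t → t ≤ q →
      R t i₂ ≤ g ^ t - (g - c) * g ^ (s₁ : ℕ) * φ ^ (t - ((s₁ : ℕ) + 1)) := by
    intro t
    induction t with
    | zero => intro h; omega
    | succ t ih =>
      intro h1 h2
      rcases Nat.lt_or_ge ((s₂ : ℕ) + 1) (t + 1) with hlt | hge
      · have ht1 : (s₂ : ℕ) + 1 ≤ t := by omega
        have htq : t < q := by omega
        have ihp := ih ht1 (by omega)
        have hφd : φ ≤ F ⟨t, htq⟩ i₂ i₂ := hφle _ _ _ (hdiag _ _)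
        have := step t htq i₂ i₂ _ (hDnn _) hφd ihp
        have heq : t + 1 - ((s₁ : ℕ) + 1) = (t - ((s₁ : ℕ) + 1)) + 1 := by omega
        rw [heq, pow_succ]
        calc R (t + 1) i₂ ≤ g ^ (t + 1) - φ * ((g - c) * g ^ (s₁:ℕ) * φ ^ (t - ((s₁:ℕ)+1))) := this
          _ = g ^ (t + 1) - (g - c) * g ^ (s₁:ℕ) * (φ ^ (t - ((s₁:ℕ)+1)) * φ) := by ring
      · have ht : t = (s₂ : ℕ) := by omega
        subst ht
        exact hbridge
  have hfinal : R q i₂ ≤ g ^ q - (g - c) * g ^ (s₁:ℕ) * φ ^ (q - ((s₁:ℕ) + 1)) :=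
    claimB q (by omega) le_rfl
  -- compare with the target bound
  have hcmp : (g - c) * φ ^ (q - 1) ≤ (g - c) * g ^ (s₁:ℕ) * φ ^ (q - ((s₁:ℕ) + 1)) := by
    have hp1 : φ ^ (s₁:ℕ) ≤ g ^ (s₁:ℕ) := pow_le_pow_left₀ hφ0.le hφg _
    have hp2 : φ ^ (q - 1) = φ ^ (s₁:ℕ) * φ ^ (q - ((s₁:ℕ) + 1)) := by
      rw [← pow_add]
      congr 1
      omega
    have hp3 : (0:ℝ) ≤ φ ^ (q - ((s₁:ℕ) + 1)) := pow_nonneg hφ0.le _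
    calc (g - c) * φ ^ (q - 1) = (g - c) * (φ ^ (s₁:ℕ) * φ ^ (q - ((s₁:ℕ)+1))) := by rw [hp2]
      _ ≤ (g - c) * (g ^ (s₁:ℕ) * φ ^ (q - ((s₁:ℕ)+1))) := by
          apply mul_le_mul_of_nonneg_left _ hgc.le
          exact mul_le_mul_of_nonneg_right hp1 hp3
      _ = (g - c) * g ^ (s₁:ℕ) * φ ^ (q - ((s₁:ℕ)+1)) := by ring
  have hgoal : (∑ j, ((List.ofFn F).reverse.prod) i₂ j) = R q i₂ := by
    have : (List.ofFn F).reverse.prod = P q := by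
      simp only [hP]
      rw [List.take_of_length_le (by simp)]
    simp [hR, this]
  constructor
  · rw [hgoal]; linarith
  · rw [hgoal]; linarith
end

section
/- Let c, d ∈ ℂ and f(w) = w² + c·w + d. Then both roots of f have strictly negative real part (f is Hurwitz stable) if and only if Re(c) > 0 and Re(c)·Im(c)·Im(d) + Re(c)²·Re(d) − Im(d)² > 0. -/
/-- Lemma 12.3 (complex Routh–Hurwitz criterion for quadratics): for
`c, d ∈ ℂ`, the polynomial `f(w) = w² + c w + d` has all roots in the open
left half-plane iff `Re(c) > 0` and
`Re(c)·Im(c)·Im(d) + Re(c)²·Re(d) − Im(d)² > 0`. -/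
theorem quadratic_hurwitz_iff (c d : ℂ) :
    (∀ w : ℂ, w ^ 2 + c * w + d = 0 → w.re < 0) ↔
      (0 < c.re ∧ 0 < c.re * c.im * d.im + c.re ^ 2 * d.re - d.im ^ 2) := by
  obtain ⟨s, hs⟩ : ∃ s : ℂ, s ^ 2 = c ^ 2 - 4 * d :=
    IsAlgClosed.exists_pow_nat_eq (c ^ 2 - 4 * d) zero_lt_two
  set a := c.re; set b := c.im; set p := d.re; set q := d.im
  set u := s.re; set v := s.im
  have hre : u ^ 2 - v ^ 2 = a ^ 2 - b ^ 2 - 4 * p := by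
    have := congrArg Complex.re hs
    simp [pow_two, Complex.mul_re, Complex.sub_re, Complex.mul_im] at this
    linarith
  have him : u * v = a * b - 2 * q := by
    have := congrArg Complex.im hs
    simp [pow_two, Complex.mul_im, Complex.sub_im, Complex.mul_re] at this
    linarith
  have key : 4 * (a * b * q + a ^ 2 * p - q ^ 2) = (a ^ 2 - u ^ 2) * (a ^ 2 + v ^ 2) := by
    linear_combination a ^ 2 * hre + (u * v + a * b - 2 * q) * him
  constructor
  · intro H
    have h1 : ((-c + s) / 2) ^ 2 + c * ((-c + s) / 2) + d = 0 := by
      linear_combination hs / 4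
    have h2 : ((-c - s) / 2) ^ 2 + c * ((-c - s) / 2) + d = 0 := by
      linear_combination hs / 4
    have r1 : (-a + u) / 2 < 0 := by
      have := H _ h1
      simpa [Complex.add_re, Complex.div_re, Complex.neg_re] using this
    have r2 : (-a - u) / 2 < 0 := by
      have := H _ h2
      simpa [Complex.sub_re, Complex.div_re, Complex.neg_re] using this
    have ha : 0 < a := by nlinarith
    refine ⟨ha, ?_⟩
    have h3 : 0 < a ^ 2 - u ^ 2 := by nlinarith
    have h4 : 0 < a ^ 2 + v ^ 2 := by nlinarith [sq_nonneg v]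
    nlinarith [mul_pos h3 h4]
  · rintro ⟨ha, hE⟩ w hw
    have hsq : (2 * w + c) ^ 2 = s ^ 2 := by linear_combination 4 * hw - hs
    have h4 : 0 < a ^ 2 + v ^ 2 := by nlinarith [sq_nonneg v]
    have hu2 : u ^ 2 < a ^ 2 := by nlinarith [mul_pos (mul_pos ha ha) h4]
    have hul : u < a := by nlinarith
    have hur : -a < u := by nlinarith
    have : (2 * w + c - s) * (2 * w + c + s) = 0 := by linear_combination hsq
    rcases mul_eq_zero.mp this with h | h
    · have : 2 * w.re + a - u = 0 := by
        have := congrArg Complex.re h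
        simpa [Complex.add_re, Complex.sub_re, Complex.mul_re] using this
      linarith
    · have : 2 * w.re + a + u = 0 := by
        have := congrArg Complex.re h
        simpa [Complex.add_re, Complex.mul_re] using this
      linarith
end

section
/- Let F ∈ ℝ^{n×n} be a nonnegative matrix, λ an eigenvalue of F with eigenvector x, and suppose F has zero diagonal. Let p be an index maximizing |x_i| and q an index maximizing |x_i| over i ≠ p. Then |λ|·|x_p| ≤ Λ_p[F]·|x_q| and |λ|·|x_q| ≤ Λ_q[F]·|x_p|; consequently |λ|² ≤ Λ_p[F]·Λ_q[F]. -/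
/-!
Evaluate the eigen-equation in row `p`: since `F p p = 0`, only the components `x j` with `j ≠ p`
enter, and each has modulus at most `|x q|`; this gives `|λ||x p| ≤ Λ_p[F]·|x q|`. In row `q`
every component has modulus at most `|x p|`, giving the second bound. Multiplying the two and
cancelling `|x p||x q|` (or, when `x q = 0`, observing that `λ = 0`) gives `|λ|² ≤ Λ_p[F]·Λ_q[F]`.
-/

open Finset

section RowBound

variable {𝕜 ι : Type*} [RCLike 𝕜] [Fintype ι]

lemma norm_mul_le_rowSum_mul_of_diag_eq_zero {F : Matrix ι ι ℝ} (hnn : ∀ i j, 0 ≤ F i j)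
    {lam : 𝕜} {x : ι → 𝕜} (heig : (F.map (fun a => (a : 𝕜))).mulVec x = lam • x)
    {i : ι} (hdiag : F i i = 0) {c : ℝ} (hc : ∀ j, j ≠ i → ‖x j‖ ≤ c) :
    ‖lam‖ * ‖x i‖ ≤ (∑ j, F i j) * c := by
  have hrow : lam * x i = ∑ j, (F i j : 𝕜) * x j := by
    simpa [Matrix.mulVec, dotProduct] using (congrFun heig i).symm
  calc ‖lam‖ * ‖x i‖ = ‖∑ j, (F i j : 𝕜) * x j‖ := by rw [← hrow, norm_mul]
    _ ≤ ∑ j, ‖(F i j : 𝕜) * x j‖ := norm_sum_le _ _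
    _ ≤ ∑ j, F i j * c := by
        refine sum_le_sum fun j _ => ?_
        rcases eq_or_ne j i with rfl | hji
        · simp [hdiag]
        · rw [norm_mul, RCLike.norm_ofReal, abs_of_nonneg (hnn i j)]
          exact mul_le_mul_of_nonneg_left (hc j hji) (hnn i j)
    _ = (∑ j, F i j) * c := (sum_mul _ _ _).symm

end RowBound

lemma sq_le_mul_of_mul_le_mul_swap {L a b P Q : ℝ} (hL : 0 ≤ L) (ha : 0 < a) (hb : 0 ≤ b)
    (hP : 0 ≤ P) (h₁ : L * a ≤ P * b) (h₂ : L * b ≤ Q * a) : L ^ 2 ≤ P * Q := by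
  rcases hb.eq_or_lt with rfl | hb
  · have hL0 : L = 0 := by nlinarith
    have hQ : 0 ≤ Q := by nlinarith
    simpa [hL0] using mul_nonneg hP hQ
  · have hprod : L ^ 2 * (a * b) ≤ P * Q * (a * b) := by
      nlinarith [mul_le_mul h₁ h₂ (by positivity) (by positivity)]
    exact le_of_mul_le_mul_right hprod (mul_pos ha hb)

theorem eigenvalue_two_row_bound_general {n : ℕ}
    (F : Matrix (Fin n) (Fin n) ℝ)
    (hnn : ∀ i j, 0 ≤ F i j) (hdiag : ∀ i, F i i = 0)
    (lam : ℂ) (x : Fin n → ℂ) (hx : x ≠ 0)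
    (heig : (F.map (fun a => (a : ℂ))).mulVec x = lam • x)
    (p q : Fin n)
    (hp : ∀ i, ‖x i‖ ≤ ‖x p‖)
    (hq : ∀ i, i ≠ p → ‖x i‖ ≤ ‖x q‖) :
    ‖lam‖ * ‖x p‖ ≤ (∑ j, F p j) * ‖x q‖ ∧
      ‖lam‖ * ‖x q‖ ≤ (∑ j, F q j) * ‖x p‖ ∧
      ‖lam‖ ^ 2 ≤ (∑ j, F p j) * (∑ j, F q j) := by
  have hrow_p := norm_mul_le_rowSum_mul_of_diag_eq_zero hnn heig (hdiag p) hq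
  have hrow_q := norm_mul_le_rowSum_mul_of_diag_eq_zero hnn heig (hdiag q) fun j _ => hp j
  have hxp : 0 < ‖x p‖ := by
    obtain ⟨i, hi⟩ := Function.ne_iff.mp hx
    exact (norm_pos_iff.mpr hi).trans_le (hp i)
  exact ⟨hrow_p, hrow_q, sq_le_mul_of_mul_le_mul_swap (norm_nonneg _) hxp (norm_nonneg _)
    (sum_nonneg fun j _ => hnn p j) hrow_p hrow_q⟩

/-- The two-largest-components eigenvector estimate: let `F` (`n ≥ 2`) be
nonnegative with zero diagonal, `λ` a complex eigenvalue of `F` with nonzero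
eigenvector `x`, `p` an index maximizing `|x i|` and `q ≠ p` maximizing
`|x i|` over `i ≠ p`.  Then `|λ||x p| ≤ Λ_p[F]·|x q|` and
`|λ||x q| ≤ Λ_q[F]·|x p|`; consequently `|λ|² ≤ Λ_p[F]·Λ_q[F]`. -/
theorem eigenvalue_two_row_bound {n : ℕ} (hn : 2 ≤ n)
    (F : Matrix (Fin n) (Fin n) ℝ)
    (hnn : ∀ i j, 0 ≤ F i j) (hdiag : ∀ i, F i i = 0)
    (lam : ℂ) (x : Fin n → ℂ) (hx : x ≠ 0)
    (heig : (F.map (fun a => (a : ℂ))).mulVec x = lam • x)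
    (p q : Fin n) (hpq : q ≠ p)
    (hp : ∀ i, ‖x i‖ ≤ ‖x p‖)
    (hq : ∀ i, i ≠ p → ‖x i‖ ≤ ‖x q‖) :
    ‖lam‖ * ‖x p‖ ≤ (∑ j, F p j) * ‖x q‖ ∧
      ‖lam‖ * ‖x q‖ ≤ (∑ j, F q j) * ‖x p‖ ∧
      ‖lam‖ ^ 2 ≤ (∑ j, F p j) * (∑ j, F q j) :=
  eigenvalue_two_row_bound_general F hnn hdiag lam x hx heig p q hp hq
end
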